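/- Principal logarithm of a symplectic matrix: if M ∈ Sp(n,ℝ) has no eigenvalue on the closed negative real axis, then its principal logarithm X = ln(M) (the unique logarithm with spectrum in the strip |Im z| < π) is a real Hamiltonian matrix, i.e. Xᵀ J + J X = 0. -/

import Mathlib

/-!
If `e^X = M` and `Mᵀ J M = J`, then `Y = J⁻¹ Xᵀ J` satisfies `e^Y = J⁻¹ Mᵀ J = M⁻¹ = e^{-X}`,
and both `Y` and `-X` have their spectrum in the strip `|Im z| < π`. So it suffices that the
matrix exponential is injective on complex matrices with spectrum in that strip.

Let `e^A = e^B = H` with `A`, `B` of this kind. Both commute with `H`, hence preserve its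
generalized eigenspaces, and since `exp` is injective on the strip, on the `λ`-part of `H` both
are `log λ` plus a nilpotent. Then `e^{kA} x` and `e^{kB} x` are `λ^k` times polynomials in
`k`, equal for every `k : ℕ` because `e^{kA} = H^k = e^{kB}`; comparing linear coefficients
gives `A x = B x`.
-/

open Matrix

/-- The standard symplectic matrix `J = [[0, Iₙ],[−Iₙ, 0]]`. -/
noncomputable def stdSymplJ (n : ℕ) : Matrix (Fin n ⊕ Fin n) (Fin n ⊕ Fin n) ℝ :=
  Matrix.fromBlocks 0 1 (-1) 0

open NormedSpace Nat Module.End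

namespace Module.End

variable {K V : Type*} [Field K] [IsAlgClosed K] [AddCommGroup V] [Module K V]
  [FiniteDimensional K V]

theorem maxGenEigenspace_eq_top_of_forall_hasEigenvalue_eq {f : End K V} {μ₀ : K}
    (h : ∀ μ, f.HasEigenvalue μ → μ = μ₀) : f.maxGenEigenspace μ₀ = ⊤ := by
  rw [eq_top_iff, ← f.iSup_maxGenEigenspace_eq_top]
  refine iSup_le fun μ => ?_
  by_cases hμ : μ = μ₀
  · rw [hμ]
  · have : f.maxGenEigenspace μ = ⊥ := by
      by_contra hne
      exact hμ (h μ (HasUnifEigenvalue.lt zero_lt_one hne))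
    simp [this]

theorem le_maxGenEigenspace_of_forall_hasEigenvector {f : End K V} {p : Submodule K V}
    (hp : ∀ x ∈ p, f x ∈ p) {μ₀ : K} (h : ∀ μ, ∀ v ∈ p, f.HasEigenvector μ v → μ = μ₀) :
    p ≤ f.maxGenEigenspace μ₀ := by
  have htop : maxGenEigenspace (f.restrict hp) μ₀ = ⊤ :=
    maxGenEigenspace_eq_top_of_forall_hasEigenvalue_eq fun μ hμ => by
      obtain ⟨w, hw⟩ := hμ.exists_hasEigenvector
      refine h μ w.1 w.2 ⟨mem_eigenspace_iff.mpr ?_, fun h0 => hw.2 (Subtype.ext h0)⟩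
      simpa using congrArg Subtype.val hw.apply_eq_smul
  intro x hx
  have hx' : (⟨x, hx⟩ : p) ∈ maxGenEigenspace (f.restrict hp) μ₀ := htop ▸ Submodule.mem_top
  rwa [maxGenEigenspace, genEigenspace_restrict] at hx'

end Module.End

open Polynomial in
theorem eq_of_forall_natCast_sum_pow_smul_eq {K ι : Type*} [CommRing K] [IsDomain K]
    [CharZero K] {D : ℕ} {v w : ℕ → ι → K}
    (h : ∀ k : ℕ, ∑ j ∈ Finset.range D, (k : K) ^ j • v j =
      ∑ j ∈ Finset.range D, (k : K) ^ j • w j)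
    {j : ℕ} (hj : j < D) : v j = w j := by
  funext i
  let P : (ℕ → ι → K) → K[X] := fun u => ∑ j ∈ Finset.range D, C (u j i) * X ^ j
  have hcoeff : ∀ u, (P u).coeff j = u j i := fun u => by
    simp [P, finsetSum_coeff, hj]
  have hP : P v = P w := by
    refine eq_of_infinite_eval_eq _ _
      ((Set.infinite_range_of_injective Nat.cast_injective).mono ?_)
    rintro _ ⟨k, rfl⟩
    have hk := congrFun (h k) i
    simp only [Finset.sum_apply, Pi.smul_apply, smul_eq_mul] at hk
    simp only [Set.mem_ofPred_eq, P, eval_finsetSum, eval_mul, eval_C, eval_pow, eval_X]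
    simpa only [mul_comm] using hk
  rw [← hcoeff v, hP, hcoeff]

def principalStrip : Set ℂ := {z | -Real.pi < z.im ∧ z.im < Real.pi}

theorem neg_mem_principalStrip {z : ℂ} (hz : z ∈ principalStrip) : -z ∈ principalStrip :=
  ⟨by simpa using hz.2, by simpa [neg_lt] using hz.1⟩

namespace Matrix

variable {ι : Type*} [Fintype ι] [DecidableEq ι]

theorem mem_maxGenEigenspace_toLin' {K : Type*} [Field K] (A : Matrix ι ι K) (μ : K)
    (x : ι → K) :
    x ∈ Module.End.maxGenEigenspace (toLin' A) μ ↔ ∃ k : ℕ, (A - μ • 1) ^ k *ᵥ x = 0 := by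
  have h : toLin' A - μ • 1 = toLinAlgEquiv' (A - μ • 1) := by
    rw [map_sub, map_smul, map_one]; rfl
  simp only [Module.End.mem_maxGenEigenspace, h, ← map_pow, toLinAlgEquiv'_apply]

theorem pow_mulVec_eq_zero_of_le {R : Type*} [Semiring R] {N : Matrix ι ι R} {x : ι → R}
    {d e : ℕ} (h : N ^ d *ᵥ x = 0) (hde : d ≤ e) : N ^ e *ᵥ x = 0 := by
  rw [← Nat.sub_add_cancel hde, pow_add, ← mulVec_mulVec, h, mulVec_zero]

theorem exp_mulVec_of_pow_mulVec_eq_zero {N : Matrix ι ι ℂ} {x : ι → ℂ} {D : ℕ}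
    (hx : N ^ D *ᵥ x = 0) :
    exp N *ᵥ x = ∑ j ∈ Finset.range D, (j ! : ℂ)⁻¹ • (N ^ j *ᵥ x) := by
  -- Any norm will do: `exp` only depends on the topology.
  let : NormedRing (Matrix ι ι ℂ) := Matrix.linftyOpNormedRing
  let : NormedAlgebra ℂ (Matrix ι ι ℂ) := Matrix.linftyOpNormedAlgebra
  have hsum := (exp_series_hasSum_exp' (𝕂 := ℂ) N).map (mulVec.addMonoidHomLeft x)
    (Continuous.matrix_mulVec continuous_id continuous_const)
  have hvanish : ∀ j ∉ Finset.range D, (j ! : ℂ)⁻¹ • (N ^ j *ᵥ x) = 0 := fun j hj => by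
    rw [pow_mulVec_eq_zero_of_le hx (not_lt.mp (Finset.mem_range.not.mp hj)), smul_zero]
  refine hsum.unique ?_
  simpa [mulVec.addMonoidHomLeft, Function.comp_def, smul_mulVec] using
    hasSum_sum_of_ne_finset_zero hvanish

theorem exp_smul_one (μ : ℂ) : exp (μ • 1 : Matrix ι ι ℂ) = Complex.exp μ • 1 := by
  rw [smul_one_eq_diagonal, smul_one_eq_diagonal, exp_diagonal, Pi.exp_def, Complex.exp_eq_exp_ℂ]

theorem exp_mulVec_of_pow_sub_smul_mulVec_eq_zero {A : Matrix ι ι ℂ} {μ : ℂ} {x : ι → ℂ}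
    {D : ℕ} (hx : (A - μ • 1) ^ D *ᵥ x = 0) :
    exp A *ᵥ x = Complex.exp μ • ∑ j ∈ Finset.range D, (j ! : ℂ)⁻¹ • ((A - μ • 1) ^ j *ᵥ x) := by
  have hsplit : exp A = exp (μ • 1 : Matrix ι ι ℂ) * exp (A - μ • 1) := by
    rw [← exp_add_of_commute _ _ ((Commute.one_left _).smul_left μ), add_sub_cancel]
  rw [hsplit, exp_smul_one, smul_mul_assoc, one_mul, smul_mulVec,
    exp_mulVec_of_pow_mulVec_eq_zero hx]

theorem exp_natCast_smul_mulVec {A : Matrix ι ι ℂ} {μ : ℂ} {x : ι → ℂ} {D : ℕ}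
    (hx : (A - μ • 1) ^ D *ᵥ x = 0) (k : ℕ) :
    exp ((k : ℂ) • A) *ᵥ x = Complex.exp (k * μ) •
      ∑ j ∈ Finset.range D, (k : ℂ) ^ j • ((j ! : ℂ)⁻¹ • ((A - μ • 1) ^ j *ᵥ x)) := by
  have hshift : (k : ℂ) • A - ((k : ℂ) * μ) • 1 = (k : ℂ) • (A - μ • 1) := by
    rw [smul_sub, mul_smul]
  have hx' : ((k : ℂ) • A - ((k : ℂ) * μ) • 1) ^ D *ᵥ x = 0 := by
    rw [hshift, smul_pow, smul_mulVec, hx, smul_zero]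
  rw [exp_mulVec_of_pow_sub_smul_mulVec_eq_zero hx', hshift]
  simp only [smul_pow, smul_mulVec, smul_comm ((_ : ℂ) ^ _) ((_ : ℂ)⁻¹)]

theorem mulVec_eq_of_exp_eq_of_pow_sub_smul_mulVec_eq_zero {A B : Matrix ι ι ℂ}
    (hAB : exp A = exp B) {μ : ℂ} {x : ι → ℂ} {D : ℕ} (hA : (A - μ • 1) ^ D *ᵥ x = 0)
    (hB : (B - μ • 1) ^ D *ᵥ x = 0) :
    A *ᵥ x = B *ᵥ x := by
  have hsum : ∀ k : ℕ, ∑ j ∈ Finset.range (D + 2),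
      (k : ℂ) ^ j • ((j ! : ℂ)⁻¹ • ((A - μ • 1) ^ j *ᵥ x)) = ∑ j ∈ Finset.range (D + 2),
      (k : ℂ) ^ j • ((j ! : ℂ)⁻¹ • ((B - μ • 1) ^ j *ᵥ x)) := fun k => by
    refine smul_right_injective _ (Complex.exp_ne_zero (k * μ)) ?_
    simp only [← exp_natCast_smul_mulVec (pow_mulVec_eq_zero_of_le hA (D.le_add_right 2)),
      ← exp_natCast_smul_mulVec (pow_mulVec_eq_zero_of_le hB (D.le_add_right 2)),
      Nat.cast_smul_eq_nsmul, exp_nsmul, hAB]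
  simpa [sub_mulVec] using eq_of_forall_natCast_sum_pow_smul_eq hsum (j := 1) (by omega)

theorem maxGenEigenspace_toLin'_exp_le {A : Matrix ι ι ℂ} (hA : spectrum ℂ A ⊆ principalStrip)
    (t : ℂ) :
    maxGenEigenspace (toLin' (exp A)) t ≤ maxGenEigenspace (toLin' A) (Complex.log t) := by
  have hcomm : Commute (toLin' (exp A)) (toLin' A) :=
    ((Commute.refl A).exp_left).map (toLinAlgEquiv' : Matrix ι ι ℂ ≃ₐ[ℂ] _)
  refine le_maxGenEigenspace_of_forall_hasEigenvector (mapsTo_maxGenEigenspace_of_comm hcomm t)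
    fun μ v hv hμv => ?_
  have hAv : (A - μ • 1) ^ 1 *ᵥ v = 0 := by
    simpa [sub_mulVec, sub_eq_zero, smul_mulVec] using hμv.apply_eq_smul
  have hexpv : v ∈ maxGenEigenspace (toLin' (exp A)) (Complex.exp μ) :=
    eigenspace_le_maxGenEigenspace <| mem_eigenspace_iff.mpr <| by
      simpa using exp_mulVec_of_pow_sub_smul_mulVec_eq_zero hAv
  have ht : Complex.exp μ = t := by
    by_contra hne
    exact hμv.2 (Submodule.disjoint_def.mp (disjoint_genEigenspace (toLin' (exp A)) hne ⊤ ⊤)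
      v hexpv hv)
  have hμ : μ ∈ spectrum ℂ A := by
    rw [← spectrum_toLin', ← hasEigenvalue_iff_mem_spectrum]
    exact hasEigenvalue_of_hasEigenvector hμv
  rw [← ht, Complex.log_exp (hA hμ).1 (hA hμ).2.le]

theorem injOn_exp_of_spectrum_subset_principalStrip :
    Set.InjOn (exp : Matrix ι ι ℂ → Matrix ι ι ℂ) {A | spectrum ℂ A ⊆ principalStrip} := by
  intro A hA B hB hAB
  refine mulVec_injective (funext fun x => ?_)
  have hx : x ∈ ⨆ t, maxGenEigenspace (toLin' (exp A)) t := by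
    rw [iSup_maxGenEigenspace_eq_top]; trivial
  refine Submodule.iSup_induction _ (motive := fun x => A *ᵥ x = B *ᵥ x) hx (fun t x hx => ?_)
    (by simp) (fun x y hx hy => by simp only [mulVec_add, hx, hy])
  obtain ⟨dA, hdA⟩ := (mem_maxGenEigenspace_toLin' _ _ _).mp
    (maxGenEigenspace_toLin'_exp_le hA t hx)
  obtain ⟨dB, hdB⟩ := (mem_maxGenEigenspace_toLin' _ _ _).mp
    (maxGenEigenspace_toLin'_exp_le hB t (hAB ▸ hx))
  exact mulVec_eq_of_exp_eq_of_pow_sub_smul_mulVec_eq_zero hAB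
    (pow_mulVec_eq_zero_of_le hdA (Nat.le_add_right dA dB))
    (pow_mulVec_eq_zero_of_le hdB (Nat.le_add_left dB dA))

theorem exp_map_algebraMap (A : Matrix ι ι ℝ) :
    exp (A.map (algebraMap ℝ ℂ)) = (exp A).map (algebraMap ℝ ℂ) := by
  let : NormedRing (Matrix ι ι ℝ) := Matrix.linftyOpNormedRing
  let : NormedAlgebra ℝ (Matrix ι ι ℝ) := Matrix.linftyOpNormedAlgebra
  let : NormedAlgebra ℚ (Matrix ι ι ℝ) := Matrix.linftyOpNormedAlgebra
  let : NormedRing (Matrix ι ι ℂ) := Matrix.linftyOpNormedRing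
  exact (map_exp (algebraMap ℝ ℂ).mapMatrix
    (continuous_id.matrix_map Complex.continuous_ofReal) A).symm

theorem injOn_exp_of_spectrum_map_subset_principalStrip :
    Set.InjOn (exp : Matrix ι ι ℝ → Matrix ι ι ℝ)
      {A | spectrum ℂ (A.map (algebraMap ℝ ℂ)) ⊆ principalStrip} := fun A hA B hB hAB =>
  map_injective (algebraMap ℝ ℂ).injective <|
    injOn_exp_of_spectrum_subset_principalStrip hA hB <| by
      rw [exp_map_algebraMap, exp_map_algebraMap, hAB]

theorem spectrum_transpose {R : Type*} [CommRing R] (A : Matrix ι ι R) :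
    spectrum R Aᵀ = spectrum R A := by
  ext μ
  rw [spectrum.mem_iff, spectrum.mem_iff, ← isUnit_transpose (algebraMap R _ μ - A),
    transpose_sub, algebraMap_eq_diagonal, diagonal_transpose]

theorem transpose_mul_add_mul_eq_zero_of_exp_eq {J M X : Matrix ι ι ℝ} (hJ : IsUnit J)
    (hM : Mᵀ * J * M = J) (hexp : exp X = M)
    (hX : spectrum ℂ (X.map (algebraMap ℝ ℂ)) ⊆ principalStrip) :
    Xᵀ * J + J * X = 0 := by
  obtain ⟨u, rfl⟩ := hJ
  set Y : Matrix ι ι ℝ := ((u⁻¹ : (Matrix ι ι ℝ)ˣ) : Matrix ι ι ℝ) * Xᵀ * u with hY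
  have hexpY : exp Y = exp (-X) := by
    rw [hY, exp_units_conj', exp_transpose, hexp, exp_neg, hexp]
    refine (inv_eq_left_inv ?_).symm
    rw [mul_assoc, mul_assoc, ← mul_assoc _ _ M, hM, Units.inv_mul]
  have hspecY : spectrum ℂ (Y.map (algebraMap ℝ ℂ)) ⊆ principalStrip := by
    let v := Units.map (algebraMap ℝ ℂ).mapMatrix.toMonoidHom u
    have hYc : Y.map (algebraMap ℝ ℂ) =
        ((v⁻¹ : (Matrix ι ι ℂ)ˣ) : Matrix ι ι ℂ) * (X.map (algebraMap ℝ ℂ))ᵀ * v := by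
      simp only [hY, v, Units.coe_map, Units.coe_map_inv, Matrix.map_mul, transpose_map]
      rfl
    rwa [hYc, spectrum.units_conjugate', spectrum_transpose]
  have hspecNegX : spectrum ℂ ((-X).map (algebraMap ℝ ℂ)) ⊆ principalStrip := by
    intro μ hμ
    rw [Matrix.map_neg _ (map_neg _), ← spectrum.neg_eq] at hμ
    simpa using neg_mem_principalStrip (hX hμ)
  have hYX : Y = -X := injOn_exp_of_spectrum_map_subset_principalStrip hspecY hspecNegX hexpY
  calc Xᵀ * u + u * X = u * (Y + X) := by
        rw [hY, mul_add, ← mul_assoc, ← mul_assoc, Units.mul_inv, one_mul]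
    _ = 0 := by rw [hYX, neg_add_cancel, mul_zero]

end Matrix

theorem isUnit_stdSymplJ (n : ℕ) : IsUnit (stdSymplJ n) := by
  have hJ : stdSymplJ n = -Matrix.J (Fin n) ℝ := by
    simp [stdSymplJ, Matrix.J, fromBlocks_neg]
  have hJJ : stdSymplJ n * stdSymplJ n = -1 := by rw [hJ, neg_mul_neg, J_squared]
  exact ⟨⟨stdSymplJ n, -stdSymplJ n, by rw [mul_neg, hJJ, neg_neg],
    by rw [neg_mul, hJJ, neg_neg]⟩, rfl⟩

theorem principal_log_symplectic_is_hamiltonian_general (n : ℕ)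
    (M X : Matrix (Fin n ⊕ Fin n) (Fin n ⊕ Fin n) ℝ)
    (hM : Mᵀ * stdSymplJ n * M = stdSymplJ n)
    (hexp : NormedSpace.exp X = M)
    (hstrip : ∀ μ ∈ spectrum ℂ (X.map (algebraMap ℝ ℂ)),
      -Real.pi < μ.im ∧ μ.im < Real.pi) :
    Xᵀ * stdSymplJ n + stdSymplJ n * X = 0 :=
  transpose_mul_add_mul_eq_zero_of_exp_eq (isUnit_stdSymplJ n) hM hexp hstrip

/-- Principal logarithm of a symplectic matrix is Hamiltonian: if `M` is symplectic with
no eigenvalue on the closed negative real axis, and `X` is a (real) logarithm of `M`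
whose eigenvalues all lie in the strip `|Im z| < π` (i.e. `X` is the principal
logarithm of `M`), then `X` is Hamiltonian. -/
theorem principal_log_symplectic_is_hamiltonian (n : ℕ)
    (M X : Matrix (Fin n ⊕ Fin n) (Fin n ⊕ Fin n) ℝ)
    (hM : Mᵀ * stdSymplJ n * M = stdSymplJ n)
    (hspec : ∀ μ ∈ spectrum ℂ (M.map (algebraMap ℝ ℂ)), ¬(μ.im = 0 ∧ μ.re ≤ 0))
    (hexp : NormedSpace.exp X = M)
    (hstrip : ∀ μ ∈ spectrum ℂ (X.map (algebraMap ℝ ℂ)),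
      -Real.pi < μ.im ∧ μ.im < Real.pi) :
    Xᵀ * stdSymplJ n + stdSymplJ n * X = 0 :=
  principal_log_symplectic_is_hamiltonian_general n M X hM hexp hstrip
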